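/- arXiv:2307.10914 — 5 statements merged into one kernel-verified Lean document; each statement's English description precedes it below -/
import Mathlib

section
/- Let μ₁, μ₂ be probability measures on ℝ whose characteristic functions satisfy μ̂₁(u+v)·μ̂₂(u+av) = μ̂₁(u−v)·μ̂₂(u−av) for all u, v ∈ ℝ, where a ≠ 0 and a ≠ −1, and suppose μ̂₁, μ̂₂ are strictly positive everywhere. Then there exist σ₁, σ₂ ≥ 0 with μ̂₁(s) = exp(−σ₁ s²) and μ̂₂(s) = exp(−σ₂ s²) for all s ∈ ℝ, and moreover σ₁ + a σ₂ = 0 (so that if a > 0 then σ₁ = σ₂ = 0). -/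
/-!
Write `φ = log μ̂₁` and `ψ = log μ̂₂`; these are real, continuous, even, nonpositive and vanish
at `0`, and the equation becomes `φ x + ψ (b x + c y) = φ y + ψ (c x + b y)` in the coordinates
`x = u + v`, `y = u - v`, where `b = (1 + a) / 2` and `c = (1 - a) / 2`. If `a = 1` this says
`φ + ψ` is constant, hence `φ = ψ = 0`. Otherwise `b, c ≠ 0` and `b² ≠ c²`, and summing the
equation with alternating signs over the corners of a rectangle `{x, x + h} × {y, y + g}` cancels
`φ`: the second differences of `ψ` do not depend on the base point. So the Cauchy difference
`ψ (s + t) - ψ s - ψ t` is bi-additive, and by continuity `ψ` is a quadratic polynomial, even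
hence `ψ s = m s²`. Putting `y = 0` gives `φ s = ψ (c s) - ψ (b s) = -m a s²`.
-/

open MeasureTheory

/-- The characteristic function of a measure on `ℝ`. -/
noncomputable def charFunR (μ : Measure ℝ) (s : ℝ) : ℂ :=
  ∫ x, Complex.exp (Complex.I * s * x) ∂μ

open scoped fwdDiff

lemma continuous_additive_eq_mul {f : ℝ → ℝ} (hf : Continuous f)
    (hadd : ∀ x y, f (x + y) = f x + f y) (x : ℝ) : f x = f 1 * x := by
  simpa [mul_comm] using map_real_smul (AddMonoidHom.mk' f hadd) hf x 1

lemma exists_quadratic_of_fwdDiff_fwdDiff_eq_apply_zero {ψ : ℝ → ℝ} (hψ : Continuous ψ)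
    (h : ∀ s α β, Δ_[β] (Δ_[α] ψ) s = Δ_[β] (Δ_[α] ψ) 0) :
    ∃ m l : ℝ, ∀ s, ψ s = m * s ^ 2 + l * s + ψ 0 := by
  set B : ℝ → ℝ → ℝ := fun s t => ψ (s + t) - ψ s - ψ t + ψ 0 with hB
  have hB_add : ∀ t s s', B (s + s') t = B s t + B s' t := by
    intro t s s'
    have := h s s' t
    simp only [fwdDiff, zero_add] at this
    simp only [hB]
    ring_nf at this ⊢
    linarith
  have hB_cont : ∀ t, Continuous (B · t) := fun t => by fun_prop
  have hB_mul : ∀ s t, B s t = B 1 1 * s * t := by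
    intro s t
    rw [continuous_additive_eq_mul (hB_cont t) (hB_add t) s,
      show B 1 t = B t 1 by simp only [hB]; ring_nf,
      continuous_additive_eq_mul (hB_cont 1) (hB_add 1) t]
    ring
  set χ : ℝ → ℝ := fun s => ψ s - ψ 0 - B 1 1 / 2 * s ^ 2 with hχ
  have hχ_add : ∀ x y, χ (x + y) = χ x + χ y := by
    intro x y
    have := hB_mul x y
    simp only [hB, hχ] at this ⊢
    linear_combination this
  refine ⟨B 1 1 / 2, χ 1, fun s => ?_⟩
  have := continuous_additive_eq_mul (by fun_prop) hχ_add s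
  simp only [hχ] at this ⊢
  linarith

section HeydeEquation

variable {φ ψ : ℝ → ℝ} {b c : ℝ}

lemma fwdDiff_fwdDiff_eq_of_heyde
    (hE : ∀ x y, φ x + ψ (b * x + c * y) = φ y + ψ (c * x + b * y)) (x y h g : ℝ) :
    Δ_[b * g] (Δ_[c * h] ψ) (c * x + b * y) = Δ_[c * g] (Δ_[b * h] ψ) (b * x + c * y) := by
  have e₁ := hE (x + h) (y + g)
  have e₂ := hE (x + h) y
  have e₃ := hE x (y + g)
  have e₄ := hE x y
  simp only [fwdDiff]
  ring_nf at e₁ e₂ e₃ e₄ ⊢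
  linarith

lemma fwdDiff_fwdDiff_eq_apply_zero_of_heyde (hb : b ≠ 0) (hc : c ≠ 0) (hbc : c ^ 2 - b ^ 2 ≠ 0)
    (hE : ∀ x y, φ x + ψ (b * x + c * y) = φ y + ψ (c * x + b * y)) (s α β : ℝ) :
    Δ_[β] (Δ_[α] ψ) s = Δ_[β] (Δ_[α] ψ) 0 := by
  -- the base point is the preimage of `(0, s)` under `(x, y) ↦ (b x + c y, c x + b y)`
  have h₁ := fwdDiff_fwdDiff_eq_of_heyde hE (c * s / (c ^ 2 - b ^ 2)) (-(b * s) / (c ^ 2 - b ^ 2))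
    (α / c) (β / b)
  have h₂ := fwdDiff_fwdDiff_eq_of_heyde hE 0 0 (α / c) (β / b)
  rw [mul_div_cancel₀ _ hb, mul_div_cancel₀ _ hc] at h₁ h₂
  rw [show c * (c * s / (c ^ 2 - b ^ 2)) + b * (-(b * s) / (c ^ 2 - b ^ 2)) = s by
      field_simp; ring,
    show b * (c * s / (c ^ 2 - b ^ 2)) + c * (-(b * s) / (c ^ 2 - b ^ 2)) = 0 by
      field_simp; ring] at h₁
  simp only [mul_zero, add_zero] at h₂
  exact h₁.trans h₂.symm

end HeydeEquation

lemma heyde_log_eq_quadratic_of_ne_one {φ ψ : ℝ → ℝ} (hψ : Continuous ψ) (hφ0 : φ 0 = 0)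
    (hψ0 : ψ 0 = 0) (hψ_even : ∀ s, ψ (-s) = ψ s) {a : ℝ} (ha0 : a ≠ 0) (ha1 : a ≠ -1)
    (ha1' : a ≠ 1) (h : ∀ u v, φ (u + v) + ψ (u + a * v) = φ (u - v) + ψ (u - a * v)) :
    ∃ m : ℝ, ∀ s, φ s = -(m * a * s ^ 2) ∧ ψ s = m * s ^ 2 := by
  have hE : ∀ x y, φ x + ψ ((1 + a) / 2 * x + (1 - a) / 2 * y)
      = φ y + ψ ((1 - a) / 2 * x + (1 + a) / 2 * y) := fun x y => by
    convert h ((x + y) / 2) ((x - y) / 2) using 3 <;> ring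
  obtain ⟨m, l, hml⟩ := exists_quadratic_of_fwdDiff_fwdDiff_eq_apply_zero hψ
    (fwdDiff_fwdDiff_eq_apply_zero_of_heyde (by grind) (by grind) (by grind) hE)
  have hl : l = 0 := by
    have := hψ_even 1
    rw [hml (-1), hml 1] at this
    linarith
  have hψ_sq : ∀ s, ψ s = m * s ^ 2 := fun s => by rw [hml, hl, hψ0]; ring
  refine ⟨m, fun s => ⟨?_, hψ_sq s⟩⟩
  have := hE s 0
  rw [hφ0, hψ_sq, hψ_sq] at this
  linear_combination this

theorem heyde_log_eq_quadratic {φ ψ : ℝ → ℝ} (hψ : Continuous ψ) (hφ0 : φ 0 = 0)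
    (hψ0 : ψ 0 = 0) (hφ_nonpos : ∀ s, φ s ≤ 0) (hψ_nonpos : ∀ s, ψ s ≤ 0)
    (hψ_even : ∀ s, ψ (-s) = ψ s) {a : ℝ} (ha0 : a ≠ 0) (ha1 : a ≠ -1)
    (h : ∀ u v, φ (u + v) + ψ (u + a * v) = φ (u - v) + ψ (u - a * v)) :
    ∃ σ₁ σ₂ : ℝ, 0 ≤ σ₁ ∧ 0 ≤ σ₂ ∧ σ₁ + a * σ₂ = 0 ∧
      ∀ s, φ s = -(σ₁ * s ^ 2) ∧ ψ s = -(σ₂ * s ^ 2) := by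
  rcases eq_or_ne a 1 with rfl | ha1'
  · have hsum : ∀ s, φ s + ψ s = 0 := fun s => by
      simpa [hφ0, hψ0] using h (s / 2) (s / 2)
    refine ⟨0, 0, le_rfl, le_rfl, by ring, fun s => ?_⟩
    constructor <;> linarith [hsum s, hφ_nonpos s, hψ_nonpos s]
  · obtain ⟨m, hm⟩ := heyde_log_eq_quadratic_of_ne_one hψ hφ0 hψ0 hψ_even ha0 ha1 ha1' h
    have hφ1 := hφ_nonpos 1
    have hψ1 := hψ_nonpos 1
    rw [(hm 1).1] at hφ1
    rw [(hm 1).2] at hψ1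
    refine ⟨m * a, -m, by linarith, by linarith, by ring, fun s => ⟨(hm s).1, ?_⟩⟩
    rw [(hm s).2]
    ring

lemma charFunR_eq_charFun (μ : Measure ℝ) : charFunR μ = charFun μ := by
  ext s
  rw [charFunR, charFun_apply_real]
  congr 1 with x
  ring_nf

lemma Real.log_re_mul_of_im_eq_zero {z w : ℂ} (hz : z.im = 0) (hz₀ : z.re ≠ 0) (hw₀ : w.re ≠ 0) :
    Real.log (z * w).re = Real.log z.re + Real.log w.re := by
  rw [Complex.mul_re, hz, zero_mul, sub_zero, Real.log_mul hz₀ hw₀]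

noncomputable def logCharFun (μ : Measure ℝ) (s : ℝ) : ℝ := Real.log (charFun μ s).re

section LogCharFun

variable (μ : Measure ℝ)

lemma logCharFun_neg (s : ℝ) : logCharFun μ (-s) = logCharFun μ s := by
  simp [logCharFun]

lemma charFun_eq_exp_logCharFun {s : ℝ} (him : (charFun μ s).im = 0)
    (hre : 0 < (charFun μ s).re) : charFun μ s = Complex.exp (logCharFun μ s) := by
  rw [← Complex.ofReal_exp, logCharFun, Real.exp_log hre]
  exact Complex.ext rfl him

variable [IsProbabilityMeasure μ]

lemma logCharFun_zero : logCharFun μ 0 = 0 := by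
  simp [logCharFun]

lemma logCharFun_nonpos (s : ℝ) : logCharFun μ s ≤ 0 := by
  rw [logCharFun, ← Real.log_abs]
  exact Real.log_nonpos (abs_nonneg _)
    ((Complex.abs_re_le_norm _).trans (norm_charFun_le_one s))

lemma continuous_logCharFun (hpos : ∀ s, 0 < (charFun μ s).re) : Continuous (logCharFun μ) :=
  (Complex.continuous_re.comp continuous_charFun).log fun s => (hpos s).ne'

end LogCharFun

/-- The Heyde theorem on the real line for positive characteristic functions: if the
characteristic functions of `μ₁, μ₂` solve the Heyde functional equation with coefficient
`a ≠ 0, a ≠ -1` and are strictly positive, then they are Gaussian with `σ₁ + a σ₂ = 0`. -/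
theorem heyde_on_real_line (μ₁ μ₂ : Measure ℝ)
    [IsProbabilityMeasure μ₁] [IsProbabilityMeasure μ₂]
    (a : ℝ) (ha0 : a ≠ 0) (ha1 : a ≠ -1)
    (hpos₁ : ∀ s : ℝ, (charFunR μ₁ s).im = 0 ∧ 0 < (charFunR μ₁ s).re)
    (hpos₂ : ∀ s : ℝ, (charFunR μ₂ s).im = 0 ∧ 0 < (charFunR μ₂ s).re)
    (heq : ∀ u v : ℝ,
      charFunR μ₁ (u + v) * charFunR μ₂ (u + a * v) =
      charFunR μ₁ (u - v) * charFunR μ₂ (u - a * v)) :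
    ∃ σ₁ σ₂ : ℝ, 0 ≤ σ₁ ∧ 0 ≤ σ₂ ∧ σ₁ + a * σ₂ = 0 ∧
      ∀ s : ℝ, charFunR μ₁ s = Complex.exp (-(σ₁ * s ^ 2)) ∧
        charFunR μ₂ s = Complex.exp (-(σ₂ * s ^ 2)) := by
  simp only [charFunR_eq_charFun] at hpos₁ hpos₂ heq ⊢
  have hlog : ∀ u v, logCharFun μ₁ (u + v) + logCharFun μ₂ (u + a * v)
      = logCharFun μ₁ (u - v) + logCharFun μ₂ (u - a * v) := fun u v => by
    simpa only [logCharFun, Real.log_re_mul_of_im_eq_zero (hpos₁ _).1 (hpos₁ _).2.ne'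
      (hpos₂ _).2.ne'] using congrArg (fun z => Real.log z.re) (heq u v)
  obtain ⟨σ₁, σ₂, hσ₁, hσ₂, hσ, hquad⟩ := heyde_log_eq_quadratic
    (continuous_logCharFun μ₂ fun s => (hpos₂ s).2) (logCharFun_zero μ₁) (logCharFun_zero μ₂)
    (logCharFun_nonpos μ₁) (logCharFun_nonpos μ₂) (logCharFun_neg μ₂) ha0 ha1 hlog
  refine ⟨σ₁, σ₂, hσ₁, hσ₂, hσ, fun s => ⟨?_, ?_⟩⟩
  · rw [charFun_eq_exp_logCharFun μ₁ (hpos₁ s).1 (hpos₁ s).2, (hquad s).1]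
    push_cast
    rfl
  · rw [charFun_eq_exp_logCharFun μ₂ (hpos₂ s).1 (hpos₂ s).2, (hquad s).2]
    push_cast
    rfl
end

section
/- Let Y be an abelian group, let α̃ : Y → Y be an endomorphism, and suppose functions ψ₁, ψ₂ : Y → ℝ satisfy ψ₁((I+α̃)u + 2v) + ψ₂(2α̃ u + (I+α̃)v) = ψ₁((I+α̃)u) + ψ₂(2α̃ u) + ψ₁(2v) + ψ₂((I+α̃)v) for all u, v ∈ Y. Define P(y) = ψ₁((I+α̃)y) + ψ₂(2α̃ y) and Q(y) = ψ₁(2y) + ψ₂((I+α̃)y). Then for all h₁, h₂, h₃, u ∈ Y one has Δ_{h₃} Δ_{2h₂} Δ_{(I+α̃)h₁} P(u) = 0 and Δ_{h₃} Δ_{(I+α̃)h₂} Δ_{2α̃ h₁} Q(u) = 0. -/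
/-- The finite difference operator `Δ_h f (y) = f (y + h) - f y`. -/
def fdiff {Y : Type*} [AddCommGroup Y] (h : Y) (f : Y → ℝ) : Y → ℝ :=
  fun y => f (y + h) - f y

/-- The finite-difference reduction step in the proof of the Heyde theorem on groups:
the functions `P` and `Q` built from a solution of the key functional equation have
vanishing mixed third finite differences. -/
theorem heyde_finite_difference_step {Y : Type*} [AddCommGroup Y] (αt : Y →+ Y)
    (ψ₁ ψ₂ : Y → ℝ)
    (heq : ∀ u v : Y,
      ψ₁ ((u + αt u) + (v + v)) + ψ₂ ((αt u + αt u) + (v + αt v)) =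
      ψ₁ (u + αt u) + ψ₂ (αt u + αt u) + ψ₁ (v + v) + ψ₂ (v + αt v))
    (P Q : Y → ℝ)
    (hP : ∀ y, P y = ψ₁ (y + αt y) + ψ₂ (αt y + αt y))
    (hQ : ∀ y, Q y = ψ₁ (y + y) + ψ₂ (y + αt y)) :
    ∀ h₁ h₂ h₃ u : Y,
      fdiff h₃ (fdiff (h₂ + h₂) (fdiff (h₁ + αt h₁) P)) u = 0 ∧
      fdiff h₃ (fdiff (h₂ + αt h₂) (fdiff (αt h₁ + αt h₁) Q)) u = 0 := by
  -- The double difference of `P` is constant in the base point.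
  have L1 : ∀ h₁ h₂ u : Y,
      fdiff (h₂ + h₂) (fdiff (h₁ + αt h₁) P) u =
        (Q (αt h₁ + αt h₁) - Q 0) -
        (Q ((h₂ + αt h₂) + (αt h₁ + αt h₁)) - Q (h₂ + αt h₂)) := by
    intro h₁ h₂ u
    have e1 := heq (u + (h₂ + h₂) + (h₁ + αt h₁)) 0
    have e2 := heq (u + (h₂ + h₂)) (αt h₁ + αt h₁)
    have e3 := heq (u + (h₁ + αt h₁)) (h₂ + αt h₂)
    have e4 := heq u ((h₂ + αt h₂) + (αt h₁ + αt h₁))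
    simp only [fdiff, hP, hQ, map_add, map_zero, add_zero, zero_add] at e1 e2 e3 e4 ⊢
    abel_nf at e1 e2 e3 e4 ⊢
    simp only [neg_one_zsmul] at e1 e2 e3 e4 ⊢
    linarith
  -- The double difference of `Q` is constant in the base point.
  have L2 : ∀ h₁ h₂ v : Y,
      fdiff (h₂ + αt h₂) (fdiff (αt h₁ + αt h₁) Q) v =
        (P (h₁ + αt h₁) - P 0) -
        (P ((h₂ + h₂) + (h₁ + αt h₁)) - P (h₂ + h₂)) := by
    intro h₁ h₂ v
    have g1 := heq ((h₂ + h₂) + (h₁ + αt h₁)) v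
    have g2 := heq (h₂ + h₂) (v + (αt h₁ + αt h₁))
    have g3 := heq (h₁ + αt h₁) (v + (h₂ + αt h₂))
    have g4 := heq 0 (v + ((h₂ + αt h₂) + (αt h₁ + αt h₁)))
    simp only [fdiff, hP, hQ, map_add, map_zero, add_zero, zero_add] at g1 g2 g3 g4 ⊢
    abel_nf at g1 g2 g3 g4 ⊢
    simp only [neg_one_zsmul] at g1 g2 g3 g4 ⊢
    linarith
  intro h₁ h₂ h₃ u
  constructor
  · show fdiff (h₂ + h₂) (fdiff (h₁ + αt h₁) P) (u + h₃) -
      fdiff (h₂ + h₂) (fdiff (h₁ + αt h₁) P) u = 0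
    rw [L1, L1, sub_self]
  · show fdiff (h₂ + αt h₂) (fdiff (αt h₁ + αt h₁) Q) (u + h₃) -
      fdiff (h₂ + αt h₂) (fdiff (αt h₁ + αt h₁) Q) u = 0
    rw [L2, L2, sub_self]
end

section
/- Let μ₁, μ₂ be probability measures on a locally compact abelian group X with character group Y, α a continuous automorphism of X with adjoint α̃, and suppose the characteristic functions satisfy μ̂₁(u+v)·μ̂₂(u+α̃v) = μ̂₁(u−v)·μ̂₂(u−α̃v) for all u, v ∈ Y. Then they also satisfy μ̂₁((I+α̃)u + 2v)·μ̂₂(2α̃u + (I+α̃)v) = μ̂₁((I+α̃)u)·μ̂₂(2α̃u)·μ̂₁(2v)·μ̂₂((I+α̃)v) for all u, v ∈ Y. -/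
open MeasureTheory

/-- The characteristic function of a measure `μ` on a group `X`, evaluated at a
character `y` of `X`. -/
noncomputable def cf {X : Type*} [AddCommGroup X] [MeasurableSpace X]
    (μ : Measure X) (y : AddChar X Circle) : ℂ :=
  ∫ x, (y x : ℂ) ∂μ

lemma cf_one {X : Type*} [AddCommGroup X] [MeasurableSpace X]
    (μ : Measure X) [IsProbabilityMeasure μ] : cf μ 1 = 1 := by
  simp [cf]

lemma AddChar.map_mul_of_apply_eq_apply_comp {A M : Type*} [AddMonoid A] [CommMonoid M]
    {σ : AddChar A M → AddChar A M} {α : A → A} (hσ : ∀ y x, σ y x = y (α x))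
    (a b : AddChar A M) : σ (a * b) = σ a * σ b := by
  ext x
  simp only [hσ, AddChar.mul_apply]

/-- The Heyde equation at `(σu·v, u·v)` has right side `f(σu/u)·g(v/σv)`, which is the product
of its right sides at `(σu, u)` and `(v, v)`. -/
theorem skitovich_eq_of_heyde_eq {G R : Type*} [CommGroup G] [CommMonoid R]
    (f g : G → R) (σ : G →* G) (hf : f 1 = 1) (hg : g 1 = 1)
    (heq : ∀ u v, f (u * v) * g (u * σ v) = f (u / v) * g (u / σ v)) (u v : G) :
    f (u * σ u * (v * v)) * g (σ u * σ u * (v * σ v)) =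
      f (u * σ u) * g (σ u * σ u) * f (v * v) * g (v * σ v) := by
  have hmixed := heq (σ u * v) (u * v)
  have hleft := heq (σ u) u
  have hright := heq v v
  rw [map_mul, mul_div_mul_right_eq_div, mul_div_mul_left_eq_div] at hmixed
  rw [div_self', hg, mul_one, mul_comm (σ u) u] at hleft
  rw [div_self', hf, one_mul] at hright
  calc f (u * σ u * (v * v)) * g (σ u * σ u * (v * σ v))
      = f (σ u * v * (u * v)) * g (σ u * v * (σ u * σ v)) := by
        congr 2 <;> ac_rfl
    _ = f (σ u / u) * g (v / σ v) := hmixed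
    _ = f (u * σ u) * g (σ u * σ u) * f (v * v) * g (v * σ v) := by
        rw [hleft, mul_assoc, hright]

theorem heyde_equation_implies_skitovich_type_equation_general {X : Type*} [AddCommGroup X]
    [MeasurableSpace X]
    (μ₁ μ₂ : Measure X) [IsProbabilityMeasure μ₁] [IsProbabilityMeasure μ₂]
    (α : X ≃+ X)
    (αt : AddChar X Circle → AddChar X Circle)
    (hadj : ∀ (y : AddChar X Circle) (x : X), αt y x = y (α x))
    (heq : ∀ u v : AddChar X Circle,
      cf μ₁ (u * v) * cf μ₂ (u * αt v) = cf μ₁ (u / v) * cf μ₂ (u / αt v)) :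
    ∀ u v : AddChar X Circle,
      cf μ₁ ((u * αt u) * (v * v)) * cf μ₂ ((αt u * αt u) * (v * αt v)) =
      cf μ₁ (u * αt u) * cf μ₂ (αt u * αt u) * cf μ₁ (v * v) * cf μ₂ (v * αt v) :=
  skitovich_eq_of_heyde_eq (cf μ₁) (cf μ₂)
    (MonoidHom.mk' αt (AddChar.map_mul_of_apply_eq_apply_comp hadj)) (cf_one μ₁) (cf_one μ₂) heq

/-- If the characteristic functions of `μ₁, μ₂` satisfy the Heyde equation
`μ̂₁(u+v)μ̂₂(u+α̃v) = μ̂₁(u−v)μ̂₂(u−α̃v)`, then they satisfy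
`μ̂₁((I+α̃)u + 2v)μ̂₂(2α̃u + (I+α̃)v) = μ̂₁((I+α̃)u)μ̂₂(2α̃u)μ̂₁(2v)μ̂₂((I+α̃)v)`.
Characters are written multiplicatively: `u + v` is `u * v`, `2v` is `v * v`,
`(I+α̃)u` is `u * α̃u`. -/
theorem heyde_equation_implies_skitovich_type_equation {X : Type*} [AddCommGroup X]
    [TopologicalSpace X] [IsTopologicalAddGroup X] [LocallyCompactSpace X]
    [MeasurableSpace X] [BorelSpace X]
    (μ₁ μ₂ : Measure X) [IsProbabilityMeasure μ₁] [IsProbabilityMeasure μ₂]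
    (α : X ≃+ X) (hα : Continuous α) (hα' : Continuous α.symm)
    (αt : AddChar X Circle → AddChar X Circle)
    (hadj : ∀ (y : AddChar X Circle) (x : X), αt y x = y (α x))
    (heq : ∀ u v : AddChar X Circle,
      cf μ₁ (u * v) * cf μ₂ (u * αt v) = cf μ₁ (u / v) * cf μ₂ (u / αt v)) :
    ∀ u v : AddChar X Circle,
      cf μ₁ ((u * αt u) * (v * v)) * cf μ₂ ((αt u * αt u) * (v * αt v)) =
      cf μ₁ (u * αt u) * cf μ₂ (αt u * αt u) * cf μ₁ (v * v) * cf μ₂ (v * αt v) :=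
  heyde_equation_implies_skitovich_type_equation_general μ₁ μ₂ α αt hadj heq
end

section
/- Let H be an abelian group in which every element satisfies 2h = 0, let α̃ : H → H be an automorphism such that (I+α̃)(H) = H, and let a ∈ ℝ, a ≠ 0. Suppose real numbers A_{h,1}, A_{h,2}, B_{h,1}, B_{h,2} (indexed by h ∈ H) satisfy A_{h₁+h₂,1} + a·A_{h₁+α̃h₂,2} = 0 and B_{h₁+h₂,1} + a·B_{h₁+α̃h₂,2} = 0 for all h₁, h₂ ∈ H, with A_{0,1} = −σ₁, A_{0,2} = −σ₂, B_{0,1} = B_{0,2} = 0. Then A_{h,1} = −σ₁, A_{h,2} = −σ₂ and B_{h,1} = B_{h,2} = 0 for all h ∈ H. -/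
/-- Propagation of the coefficients of the quadratic and linear terms over the group `H`
of elements of order two, given the relations coming from the Heyde equation and density
(here: surjectivity) of `I + α̃`. -/
theorem coefficients_are_constant {H : Type*} [AddCommGroup H]
    (h2 : ∀ h : H, h + h = 0)
    (αt : H ≃+ H) (hsurj : Function.Surjective fun h : H => h + αt h)
    (a : ℝ) (ha : a ≠ 0)
    (A₁ A₂ B₁ B₂ : H → ℝ) (σ₁ σ₂ : ℝ)
    (hA : ∀ h₁ h₂ : H, A₁ (h₁ + h₂) + a * A₂ (h₁ + αt h₂) = 0)
    (hB : ∀ h₁ h₂ : H, B₁ (h₁ + h₂) + a * B₂ (h₁ + αt h₂) = 0)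
    (hA01 : A₁ 0 = -σ₁) (hA02 : A₂ 0 = -σ₂)
    (hB01 : B₁ 0 = 0) (hB02 : B₂ 0 = 0) :
    ∀ h : H, A₁ h = -σ₁ ∧ A₂ h = -σ₂ ∧ B₁ h = 0 ∧ B₂ h = 0 := by
  intro h
  obtain ⟨h', hh'⟩ := hsurj h
  simp only at hh'
  -- A₂ h = A₂ 0
  have key : ∀ (C₁ C₂ : H → ℝ), (∀ h₁ h₂ : H, C₁ (h₁ + h₂) + a * C₂ (h₁ + αt h₂) = 0) →
      C₂ h = C₂ 0 ∧ C₁ h = -a * C₂ 0 := by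
    intro C₁ C₂ hC
    have e1 := hC h' h'
    rw [h2 h', hh'] at e1
    have e2 := hC 0 0
    rw [add_zero, map_zero, add_zero] at e2
    have hC2 : C₂ h = C₂ 0 := by
      have : a * C₂ h = a * C₂ 0 := by linarith
      exact mul_left_cancel₀ ha this
    refine ⟨hC2, ?_⟩
    have e3 := hC h 0
    rw [add_zero, map_zero, add_zero] at e3
    rw [hC2] at e3; linarith
  obtain ⟨hA2, hA1⟩ := key A₁ A₂ hA
  obtain ⟨hB2, hB1⟩ := key B₁ B₂ hB
  have e2 := hA 0 0
  rw [add_zero, map_zero, add_zero, hA01, hA02] at e2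
  refine ⟨?_, by rw [hA2, hA02], by rw [hB1, hB02]; ring, by rw [hB2, hB02]⟩
  rw [hA1, hA02]; linarith
end

section
/- Let A₁ = [[4,2],[2,2]] and A₂ = [[2,1],[1,1]] be symmetric positive definite 2×2 real matrices, and let μⱼ be the centered Gaussian measures on ℝ² with characteristic functions μ̂ⱼ(y) = exp(−⟨Aⱼ y, y⟩). Let α : ℝ² → ℝ² be the automorphism α(x) = −2x, with adjoint α̃(y) = −2y. Then the characteristic functions satisfy the Heyde equation μ̂₁(u+v)·μ̂₂(u+α̃v) = μ̂₁(u−v)·μ̂₂(u−α̃v) for all u, v ∈ ℝ², yet neither μ₁ nor μ₂ is a product measure of the form γ ⊗ ω with γ a one-dimensional Gaussian on the first factor. -/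
open MeasureTheory

/-- The characteristic function of a measure on `ℝ × ℝ`. -/
noncomputable def charFunR2 (μ : Measure (ℝ × ℝ)) (y : ℝ × ℝ) : ℂ :=
  ∫ x, Complex.exp (Complex.I * (y.1 * x.1 + y.2 * x.2)) ∂μ

/-- The quadratic form `⟨A₁ y, y⟩` of `A₁ = [[4,2],[2,2]]`. -/
def q₁ (y : ℝ × ℝ) : ℝ := 4 * y.1 ^ 2 + 4 * y.1 * y.2 + 2 * y.2 ^ 2

/-- The quadratic form `⟨A₂ y, y⟩` of `A₂ = [[2,1],[1,1]]`. -/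
def q₂ (y : ℝ × ℝ) : ℝ := 2 * y.1 ^ 2 + 2 * y.1 * y.2 + y.2 ^ 2

/-!
The characteristic functions are `exp (-q₁)` and `exp (-q₂)` with `q₁ = 2 q₂`, so the Heyde
equation reduces to `2 (q₂ (u + v) - q₂ (u - v)) = q₂ (u + 2v) - q₂ (u - 2v)`, both sides
being `8 ⟨A₂ u, v⟩`. A characteristic function of the form `E (y.1) * g (y.2)` satisfies the
rectangle identity `φ (a, c) φ (b, d) = φ (a, d) φ (b, c)`; for `φ = exp (-q)` this forces the
mixed term of `q` to vanish, and the mixed terms of `q₁` and `q₂` do not.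
-/

lemma q₂_eq_sq_add_sq (y : ℝ × ℝ) : q₂ y = (y.1 + y.2) ^ 2 + y.1 ^ 2 := by
  unfold q₂; ring

lemma q₁_eq_two_mul_q₂ (y : ℝ × ℝ) : q₁ y = 2 * q₂ y := by
  unfold q₁ q₂; ring

lemma q₂_pos {y : ℝ × ℝ} (hy : y ≠ 0) : 0 < q₂ y := by
  have h : y.1 ≠ 0 ∨ y.1 + y.2 ≠ 0 := by
    by_contra! h
    exact hy (Prod.ext h.1 (show y.2 = 0 by linarith [h.1, h.2]))
  rw [q₂_eq_sq_add_sq]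
  rcases h with h | h <;> positivity

lemma q₁_pos {y : ℝ × ℝ} (hy : y ≠ 0) : 0 < q₁ y := by
  rw [q₁_eq_two_mul_q₂]
  exact mul_pos two_pos (q₂_pos hy)

lemma q₁_add_q₂_heyde (u v : ℝ × ℝ) :
    q₁ (u + v) + q₂ (u + (-2 : ℝ) • v) = q₁ (u - v) + q₂ (u - (-2 : ℝ) • v) := by
  simp only [q₁, q₂, Prod.fst_add, Prod.snd_add, Prod.fst_sub, Prod.snd_sub,
    Prod.smul_fst, Prod.smul_snd, smul_eq_mul]
  ring

section Gaussian

variable {μ μ₁ μ₂ : Measure (ℝ × ℝ)} {q q' : ℝ × ℝ → ℝ}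

lemma charFunR2_heyde_of_eq_exp (h₁ : ∀ y, charFunR2 μ₁ y = Complex.exp (-(q y : ℂ)))
    (h₂ : ∀ y, charFunR2 μ₂ y = Complex.exp (-(q' y : ℂ))) (a : ℝ)
    (hq : ∀ u v : ℝ × ℝ, q (u + v) + q' (u + a • v) = q (u - v) + q' (u - a • v))
    (u v : ℝ × ℝ) :
    charFunR2 μ₁ (u + v) * charFunR2 μ₂ (u + a • v) =
      charFunR2 μ₁ (u - v) * charFunR2 μ₂ (u - a • v) := by
  simp only [h₁, h₂, ← Complex.exp_add, ← neg_add, ← Complex.ofReal_add, hq]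

lemma add_eq_add_of_charFunR2_eq_exp_mul (hμ : ∀ y, charFunR2 μ y = Complex.exp (-(q y : ℂ)))
    {E g : ℝ → ℂ} (hEg : ∀ y : ℝ × ℝ, charFunR2 μ y = E y.1 * g y.2) (a b c d : ℝ) :
    q (a, c) + q (b, d) = q (a, d) + q (b, c) := by
  have hrect : charFunR2 μ (a, c) * charFunR2 μ (b, d) =
      charFunR2 μ (a, d) * charFunR2 μ (b, c) := by
    simp only [hEg]; ring
  simp only [hμ, ← Complex.exp_add, ← neg_add, ← Complex.ofReal_add] at hrect
  have hnorm := congrArg norm hrect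
  simp only [Complex.norm_exp, Complex.neg_re, Complex.ofReal_re, Real.exp_eq_exp] at hnorm
  linarith

lemma not_exists_gaussian_factor_of_charFunR2_eq_exp
    (hμ : ∀ y, charFunR2 μ y = Complex.exp (-(q y : ℂ)))
    (hq : q (1, 1) + q (0, 0) ≠ q (1, 0) + q (0, 1)) :
    ¬ ∃ (σ b : ℝ) (g : ℝ → ℂ), 0 ≤ σ ∧ ∀ y : ℝ × ℝ,
      charFunR2 μ y = Complex.exp (Complex.I * b * y.1 - σ * y.1 ^ 2) * g y.2 := by
  rintro ⟨σ, b, g, -, hg⟩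
  exact hq (add_eq_add_of_charFunR2_eq_exp_mul hμ
    (E := fun s => Complex.exp (Complex.I * b * s - σ * s ^ 2)) hg 1 0 1 0)

end Gaussian

theorem gaussian_counterexample_on_R2_general (μ₁ μ₂ : Measure (ℝ × ℝ))
    (h₁ : ∀ y : ℝ × ℝ, charFunR2 μ₁ y = Complex.exp (-(q₁ y : ℂ)))
    (h₂ : ∀ y : ℝ × ℝ, charFunR2 μ₂ y = Complex.exp (-(q₂ y : ℂ))) :
    (∀ y : ℝ × ℝ, y ≠ 0 → 0 < q₁ y ∧ 0 < q₂ y) ∧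
    (∀ y : ℝ × ℝ, q₁ y = 2 * q₂ y) ∧
    (∀ u v : ℝ × ℝ,
      charFunR2 μ₁ (u + v) * charFunR2 μ₂ (u + (-2 : ℝ) • v) =
      charFunR2 μ₁ (u - v) * charFunR2 μ₂ (u - (-2 : ℝ) • v)) ∧
    (¬ ∃ (σ b : ℝ) (g : ℝ → ℂ), 0 ≤ σ ∧ ∀ y : ℝ × ℝ,
      charFunR2 μ₁ y = Complex.exp (Complex.I * b * y.1 - σ * y.1 ^ 2) * g y.2) ∧
    (¬ ∃ (σ b : ℝ) (g : ℝ → ℂ), 0 ≤ σ ∧ ∀ y : ℝ × ℝ,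
      charFunR2 μ₂ y = Complex.exp (Complex.I * b * y.1 - σ * y.1 ^ 2) * g y.2) := by
  refine ⟨fun y hy => ⟨q₁_pos hy, q₂_pos hy⟩, q₁_eq_two_mul_q₂,
    charFunR2_heyde_of_eq_exp h₁ h₂ (-2) q₁_add_q₂_heyde,
    not_exists_gaussian_factor_of_charFunR2_eq_exp h₁ ?_,
    not_exists_gaussian_factor_of_charFunR2_eq_exp h₂ ?_⟩
  all_goals norm_num [q₁, q₂]

/-- The Gaussian measures on `ℝ²` with covariance forms `A₁ = [[4,2],[2,2]]`,
`A₂ = [[2,1],[1,1]]` satisfy the Heyde equation for `α = -2I`, the forms are positive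
definite, yet neither measure is a product `γ ⊗ ω` with `γ` a one-dimensional Gaussian
on the first factor. -/
theorem gaussian_counterexample_on_R2 (μ₁ μ₂ : Measure (ℝ × ℝ))
    [IsProbabilityMeasure μ₁] [IsProbabilityMeasure μ₂]
    (h₁ : ∀ y : ℝ × ℝ, charFunR2 μ₁ y = Complex.exp (-(q₁ y : ℂ)))
    (h₂ : ∀ y : ℝ × ℝ, charFunR2 μ₂ y = Complex.exp (-(q₂ y : ℂ))) :
    (∀ y : ℝ × ℝ, y ≠ 0 → 0 < q₁ y ∧ 0 < q₂ y) ∧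
    (∀ y : ℝ × ℝ, q₁ y = 2 * q₂ y) ∧
    (∀ u v : ℝ × ℝ,
      charFunR2 μ₁ (u + v) * charFunR2 μ₂ (u + (-2 : ℝ) • v) =
      charFunR2 μ₁ (u - v) * charFunR2 μ₂ (u - (-2 : ℝ) • v)) ∧
    (¬ ∃ (σ b : ℝ) (g : ℝ → ℂ), 0 ≤ σ ∧ ∀ y : ℝ × ℝ,
      charFunR2 μ₁ y = Complex.exp (Complex.I * b * y.1 - σ * y.1 ^ 2) * g y.2) ∧
    (¬ ∃ (σ b : ℝ) (g : ℝ → ℂ), 0 ≤ σ ∧ ∀ y : ℝ × ℝ,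
      charFunR2 μ₂ y = Complex.exp (Complex.I * b * y.1 - σ * y.1 ^ 2) * g y.2) :=
  gaussian_counterexample_on_R2_general μ₁ μ₂ h₁ h₂
end
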